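/- Let K be a field of characteristic zero, let M = Σ_{i=0}^r p_i ∂^i with p_i ∈ K[x], let L ∈ K[x]⟨∂⟩, and suppose A ∈ K(x)⟨∂⟩ of order at most r−1 satisfies M∘A = B∘L for some B ∈ K(x)⟨∂⟩, where L has order r. Let α ∈ K̄ be a point that is a singularity of neither M nor L (neither leading coefficient vanishes at α and all coefficients are regular at α, with L's indicial polynomial at α having roots exactly 0,1,…,r−1). Then no coefficient of A has a pole at α. -/

import Mathlib

open Polynomial

/-- The derivative of a rational function, `(p/q)' = (p'q − pq')/q²`. -/
noncomputable def ratDeriv {K : Type*} [Field K] (f : RatFunc K) : RatFunc K :=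
  (algebraMap K[X] (RatFunc K) (derivative f.num) * algebraMap K[X] (RatFunc K) f.denom -
      algebraMap K[X] (RatFunc K) f.num * algebraMap K[X] (RatFunc K) (derivative f.denom)) /
    algebraMap K[X] (RatFunc K) (f.denom ^ 2)

/-- The action of the differential operator `M = ∑_{i=0}^r pᵢ ∂ⁱ` (with polynomial
coefficients `pᵢ`) on a rational function. -/
noncomputable def applyOp {K : Type*} [Field K] (r : ℕ) (p : ℕ → K[X]) (f : RatFunc K) :
    RatFunc K :=
  ∑ i ∈ Finset.range (r + 1), algebraMap K[X] (RatFunc K) (p i) * ratDeriv^[i] f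

/-- `f` has no pole at `α`. -/
def regAt {K : Type*} [Field K] (α : K) (f : RatFunc K) : Prop :=
  Polynomial.eval α f.denom ≠ 0

/-- `ord_α f ≥ m` : the valuation of `f` at `α` (as a Laurent series in `x − α`)
is at least `m`. -/
def ordGe {K : Type*} [Field K] (α : K) (m : ℤ) (f : RatFunc K) : Prop :=
  regAt α ((RatFunc.X - RatFunc.C α) ^ (-m) * f)

/-- `f` has degree (order at infinity, negated) at most `m`, i.e. `ord_∞ f ≥ −m`. -/
def degLe {K : Type*} [Field K] (m : ℤ) (f : RatFunc K) : Prop :=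
  f = 0 ∨ RatFunc.intDegree f ≤ m

/-!
If some `aᵢ` has a pole at `α`, let `m < 0` be the least order at `α` of the coefficients of `A`,
attained by `a_j = c (x - α)^m + ⋯`. Since the indicial roots of `L` at `α` are `0, …, r - 1`,
some polynomial `F ≡ (x - α)^j mod (x - α)^r` makes `L F` vanish at `α` to arbitrarily high
order, so that `B (L F)` has order `> m - r` at `α`. But `A F = j! c (x - α)^m + ⋯`, hence
`M (A F) = p_r(α) · m (m - 1) ⋯ (m - r + 1) · j! c (x - α)^(m - r) + ⋯`, and this coefficient is
nonzero because `m < 0`.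
-/

section

variable {K : Type*} [Field K]

local notation "ι" => algebraMap K[X] (RatFunc K)

theorem ratDeriv_div (p q : K[X]) (hq : q ≠ 0) :
    ratDeriv (ι p / ι q) = ι (derivative p * q - p * derivative q) / ι (q ^ 2) := by
  set f := ι p / ι q
  have hd : f.denom ≠ 0 := f.denom_ne_zero
  have hcross : p * f.denom = f.num * q := by
    apply RatFunc.algebraMap_injective K
    rw [map_mul, map_mul, ← div_eq_div_iff (RatFunc.algebraMap_ne_zero hq)
      (RatFunc.algebraMap_ne_zero hd), f.num_div_denom]
  have hcross' := congrArg derivative hcross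
  rw [derivative_mul, derivative_mul] at hcross'
  rw [ratDeriv, div_eq_div_iff (RatFunc.algebraMap_ne_zero (pow_ne_zero 2 hd))
    (RatFunc.algebraMap_ne_zero (pow_ne_zero 2 hq))]
  simp only [← map_mul, ← map_sub]
  congr 1
  linear_combination (derivative f.denom * q + derivative q * f.denom) * hcross -
    q * f.denom * hcross'

theorem ratDeriv_algebraMap (p : K[X]) : ratDeriv (ι p) = ι (derivative p) := by
  simpa using ratDeriv_div p 1 one_ne_zero

theorem ratDeriv_iterate_algebraMap (n : ℕ) (p : K[X]) :
    ratDeriv^[n] (ι p) = ι (derivative^[n] p) := by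
  induction n generalizing p with
  | zero => rfl
  | succ n ih => rw [Function.iterate_succ_apply, ratDeriv_algebraMap, ih,
      Function.iterate_succ_apply]

theorem ratDeriv_add (f g : RatFunc K) : ratDeriv (f + g) = ratDeriv f + ratDeriv g := by
  induction f using RatFunc.induction_on with | f p₁ q₁ hq₁ => ?_
  induction g using RatFunc.induction_on with | f p₂ q₂ hq₂ => ?_
  have h₁ := RatFunc.algebraMap_ne_zero hq₁
  have h₂ := RatFunc.algebraMap_ne_zero hq₂
  rw [div_add_div _ _ h₁ h₂, ← map_mul, ← map_mul, ← map_mul, ← map_add,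
    ratDeriv_div _ _ (mul_ne_zero hq₁ hq₂), ratDeriv_div _ _ hq₁, ratDeriv_div _ _ hq₂]
  simp only [derivative_mul, map_mul, map_add, map_sub, map_pow]
  field_simp
  ring

theorem ratDeriv_mul (f g : RatFunc K) :
    ratDeriv (f * g) = ratDeriv f * g + f * ratDeriv g := by
  induction f using RatFunc.induction_on with | f p₁ q₁ hq₁ => ?_
  induction g using RatFunc.induction_on with | f p₂ q₂ hq₂ => ?_
  have h₁ := RatFunc.algebraMap_ne_zero hq₁
  have h₂ := RatFunc.algebraMap_ne_zero hq₂
  rw [div_mul_div_comm, ← map_mul, ← map_mul, ratDeriv_div _ _ (mul_ne_zero hq₁ hq₂),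
    ratDeriv_div _ _ hq₁, ratDeriv_div _ _ hq₂]
  simp only [derivative_mul, map_mul, map_add, map_sub, map_pow]
  field_simp
  ring

theorem ratDeriv_smul (c : K) (f : RatFunc K) : ratDeriv (c • f) = c • ratDeriv f := by
  rw [Algebra.smul_def, Algebra.smul_def, RatFunc.algebraMap_eq_C, ← RatFunc.algebraMap_C,
    ratDeriv_mul, ratDeriv_algebraMap, derivative_C, map_zero, zero_mul, zero_add]

noncomputable def ratDerivation : Derivation K (RatFunc K) (RatFunc K) :=
  Derivation.mk' ⟨⟨ratDeriv, ratDeriv_add⟩, ratDeriv_smul⟩ fun f g => by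
    simp only [LinearMap.coe_mk, AddHom.coe_mk, smul_eq_mul, ratDeriv_mul]
    ring

theorem ratDeriv_X_sub_C_zpow (α : K) (m : ℤ) :
    ratDeriv (ι (X - C α) ^ m) = m * ι (X - C α) ^ (m - 1) := by
  have h : ratDeriv (ι (X - C α) ^ m) =
      m • ι (X - C α) ^ (m - 1) • ratDeriv (ι (X - C α)) :=
    ratDerivation.leibniz_zpow (ι (X - C α)) m
  rw [h, ratDeriv_algebraMap, derivative_X_sub_C, map_one, smul_eq_mul, mul_one, zsmul_eq_mul]

variable {α : K} {m m' : ℤ} {c d : K} {f g : RatFunc K}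

/-- `f = c (x - α)^m + O((x - α)^(m+1))` near `α`. -/
def HasTermAt (α : K) (m : ℤ) (c : K) (f : RatFunc K) : Prop :=
  ∃ p q : K[X], q.eval α ≠ 0 ∧ f = ι (X - C α) ^ m * (ι p / ι q) ∧ c * q.eval α = p.eval α

theorem algebraMap_X_sub_C_ne_zero (α : K) : ι (X - C α) ≠ 0 :=
  RatFunc.algebraMap_ne_zero (X_sub_C_ne_zero α)

theorem algebraMap_ne_zero_of_eval_ne_zero {q : K[X]} (hq : q.eval α ≠ 0) : ι q ≠ 0 :=
  RatFunc.algebraMap_ne_zero fun h => hq (by simp [h])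

theorem hasTermAt_X_sub_C_pow_mul (α : K) (n : ℕ) (w : K[X]) :
    HasTermAt α n (w.eval α) (ι ((X - C α) ^ n * w)) :=
  ⟨w, 1, by simp, by rw [map_mul, map_pow, map_one, div_one, zpow_natCast], by simp⟩

theorem hasTermAt_algebraMap (α : K) (w : K[X]) : HasTermAt α 0 (w.eval α) (ι w) := by
  simpa using hasTermAt_X_sub_C_pow_mul α 0 w

theorem exists_hasTermAt_of_dvd {n : ℕ} {p : K[X]} (h : (X - C α) ^ n ∣ p) :
    ∃ c, HasTermAt α n c (ι p) := by
  obtain ⟨w, rfl⟩ := h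
  exact ⟨_, hasTermAt_X_sub_C_pow_mul α n w⟩

namespace HasTermAt

theorem zero (α : K) (m : ℤ) : HasTermAt α m 0 (0 : RatFunc K) :=
  ⟨0, 1, by simp, by simp, by simp⟩

theorem add (hf : HasTermAt α m c f) (hg : HasTermAt α m d g) :
    HasTermAt α m (c + d) (f + g) := by
  obtain ⟨p₁, q₁, hq₁, rfl, hc⟩ := hf
  obtain ⟨p₂, q₂, hq₂, rfl, hd⟩ := hg
  refine ⟨p₁ * q₂ + q₁ * p₂, q₁ * q₂, by simp [hq₁, hq₂], ?_, ?_⟩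
  · rw [← mul_add, div_add_div _ _ (algebraMap_ne_zero_of_eval_ne_zero hq₁)
      (algebraMap_ne_zero_of_eval_ne_zero hq₂)]
    simp only [map_add, map_mul]
  · simp only [eval_add, eval_mul]
    linear_combination q₂.eval α * hc + q₁.eval α * hd

theorem mul (hf : HasTermAt α m c f) (hg : HasTermAt α m' d g) :
    HasTermAt α (m + m') (c * d) (f * g) := by
  obtain ⟨p₁, q₁, hq₁, rfl, hc⟩ := hf
  obtain ⟨p₂, q₂, hq₂, rfl, hd⟩ := hg
  refine ⟨p₁ * p₂, q₁ * q₂, by simp [hq₁, hq₂], ?_, ?_⟩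
  · rw [zpow_add₀ (algebraMap_X_sub_C_ne_zero α), map_mul, map_mul, ← div_mul_div_comm]
    ring
  · simp only [eval_mul]
    linear_combination d * q₂.eval α * hc + p₁.eval α * hd

theorem sum {σ : Type*} {s : Finset σ} {c : σ → K} {f : σ → RatFunc K}
    (h : ∀ i ∈ s, HasTermAt α m (c i) (f i)) :
    HasTermAt α m (∑ i ∈ s, c i) (∑ i ∈ s, f i) := by
  classical
  induction s using Finset.induction_on with
  | empty => simpa using zero α m
  | insert x s hx ih =>
    rw [Finset.sum_insert hx, Finset.sum_insert hx]
    exact (h x (Finset.mem_insert_self x s)).add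
      (ih fun i hi => h i (Finset.mem_insert_of_mem hi))

theorem exists_sum {σ : Type*} {s : Finset σ} {f : σ → RatFunc K}
    (h : ∀ i ∈ s, ∃ c, HasTermAt α m c (f i)) : ∃ c, HasTermAt α m c (∑ i ∈ s, f i) := by
  choose! c hc using h
  exact ⟨_, sum hc⟩

theorem of_lt (hf : HasTermAt α m' c f) (h : m < m') : HasTermAt α m 0 f := by
  obtain ⟨p, q, hq, rfl, -⟩ := hf
  obtain ⟨k, hk, rfl⟩ : ∃ k : ℕ, k ≠ 0 ∧ m' = m + k := ⟨(m' - m).toNat, by omega, by omega⟩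
  refine ⟨(X - C α) ^ k * p, q, hq, ?_, by simp [hk]⟩
  rw [zpow_add₀ (algebraMap_X_sub_C_ne_zero α), map_mul, map_pow, zpow_natCast]
  ring

theorem exists_of_le (hf : HasTermAt α m' c f) (h : m ≤ m') : ∃ d, HasTermAt α m d f := by
  rcases h.eq_or_lt with rfl | h
  · exact ⟨c, hf⟩
  · exact ⟨0, hf.of_lt h⟩

theorem unique (hc : HasTermAt α m c f) (hd : HasTermAt α m d f) : c = d := by
  obtain ⟨p₁, q₁, hq₁, rfl, hc⟩ := hc
  obtain ⟨p₂, q₂, hq₂, hf, hd⟩ := hd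
  have hcross : p₁ * q₂ = p₂ * q₁ := by
    apply RatFunc.algebraMap_injective K
    rw [map_mul, map_mul, ← div_eq_div_iff (algebraMap_ne_zero_of_eval_ne_zero hq₁)
      (algebraMap_ne_zero_of_eval_ne_zero hq₂)]
    exact mul_left_cancel₀ (zpow_ne_zero m (algebraMap_X_sub_C_ne_zero α)) hf
  have := congrArg (eval α) hcross
  simp only [eval_mul, ← hc, ← hd] at this
  exact mul_right_cancel₀ hq₂ (mul_right_cancel₀ hq₁ (by linear_combination this))

theorem regAt (hf : HasTermAt α m c f) (hm : 0 ≤ m) : regAt α f := by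
  obtain ⟨p, q, hq, rfl, -⟩ := hf
  lift m to ℕ using hm with n
  have hq0 : q ≠ 0 := fun h => hq (by simp [h])
  obtain ⟨e, he⟩ : RatFunc.denom (ι (X - C α) ^ (n : ℤ) * (ι p / ι q)) ∣ q :=
    (RatFunc.denom_dvd hq0).mpr ⟨(X - C α) ^ n * p, by rw [map_mul, map_pow, zpow_natCast,
      mul_div_assoc]⟩
  intro h0
  exact hq (by rw [he, eval_mul, h0, zero_mul])

theorem ratDeriv (hf : HasTermAt α m c f) :
    HasTermAt α (m - 1) (m * c) (ratDeriv f) := by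
  obtain ⟨p, q, hq, rfl, hc⟩ := hf
  have hq0 : q ≠ 0 := fun h => hq (by simp [h])
  refine ⟨(m : K[X]) * p * q + (X - C α) * (derivative p * q - p * derivative q), q ^ 2,
    by simp [hq], ?_, ?_⟩
  · have hz := algebraMap_X_sub_C_ne_zero α
    have hq' := RatFunc.algebraMap_ne_zero hq0
    rw [ratDeriv_mul, ratDeriv_X_sub_C_zpow, ratDeriv_div p q hq0,
      show m = m - 1 + 1 by ring, zpow_add_one₀ hz, add_sub_cancel_right]
    simp only [map_mul, map_add, map_sub, map_pow, map_intCast]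
    field_simp
  · simp only [eval_add, eval_mul, eval_sub, eval_pow, eval_intCast, eval_C, eval_X, sub_self]
    linear_combination (m : K) * q.eval α * hc

theorem iterate_ratDeriv (hf : HasTermAt α m c f) (n : ℕ) :
    HasTermAt α (m - n) ((∏ t ∈ Finset.range n, ((m : K) - t)) * c) (_root_.ratDeriv^[n] f) := by
  induction n with
  | zero => simpa using hf
  | succ n ih =>
    rw [Function.iterate_succ_apply']
    convert ih.ratDeriv using 1
    · push_cast
      ring
    · rw [Finset.prod_range_succ]
      push_cast
      ring

/-- The coefficient is the indicial polynomial `p r(α) · s (s - 1) ⋯ (s - r + 1)` of `∑ pᵢ ∂ⁱ`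
at `α`, evaluated at `s = m`. -/
theorem applyOp (hf : HasTermAt α m c f) (r : ℕ) (p : ℕ → K[X]) :
    HasTermAt α (m - r) ((p r).eval α * (∏ t ∈ Finset.range r, ((m : K) - t)) * c)
      (applyOp r p f) := by
  have hterm : ∀ i ∈ Finset.range (r + 1), HasTermAt α (m - r)
      (if i = r then (p r).eval α * (∏ t ∈ Finset.range r, ((m : K) - t)) * c else 0)
      (ι (p i) * _root_.ratDeriv^[i] f) := by
    intro i hi
    have hpf := (hasTermAt_algebraMap α (p i)).mul (hf.iterate_ratDeriv i)
    rw [zero_add] at hpf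
    split_ifs with hir
    · subst hir
      rwa [mul_assoc]
    · exact hpf.of_lt (by have := Finset.mem_range.mp hi; omega)
  simpa [_root_.applyOp] using sum hterm

end HasTermAt

/-- Junk value `ordAt α 0 = 0`. -/
noncomputable def ordAt (α : K) (f : RatFunc K) : ℤ :=
  f.num.rootMultiplicity α - f.denom.rootMultiplicity α

theorem exists_hasTermAt_ordAt (hf : f ≠ 0) : ∃ c ≠ 0, HasTermAt α (ordAt α f) c f := by
  obtain ⟨p, hp, hpα⟩ := f.num.exists_eq_pow_rootMultiplicity_mul_and_not_dvd
    (RatFunc.num_ne_zero hf) α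
  obtain ⟨q, hq, hqα⟩ := f.denom.exists_eq_pow_rootMultiplicity_mul_and_not_dvd
    f.denom_ne_zero α
  rw [dvd_iff_isRoot, IsRoot.def] at hpα hqα
  refine ⟨p.eval α / q.eval α, div_ne_zero hpα hqα, p, q, hqα, ?_, div_mul_cancel₀ _ hqα⟩
  conv_lhs => rw [← f.num_div_denom, hp, hq]
  rw [ordAt, zpow_sub₀ (algebraMap_X_sub_C_ne_zero α), zpow_natCast, zpow_natCast,
    map_mul, map_mul, map_pow, map_pow, div_mul_div_comm]

theorem exists_hasTermAt_of_le_ordAt (hm : m ≤ ordAt α f) : ∃ c, HasTermAt α m c f := by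
  rcases eq_or_ne f 0 with rfl | hf
  · exact ⟨0, HasTermAt.zero α m⟩
  · obtain ⟨c, -, hc⟩ := exists_hasTermAt_ordAt (α := α) hf
    exact hc.exists_of_le hm

theorem exists_forall_hasTermAt {σ : Type*} (α : K) (s : Finset σ) (f : σ → RatFunc K) :
    ∃ m, ∀ i ∈ s, ∃ c, HasTermAt α m c (f i) := by
  classical
  obtain ⟨M, hM⟩ := (s.image fun i => -ordAt α (f i)).exists_le
  exact ⟨-M, fun i hi =>
    exists_hasTermAt_of_le_ordAt (by linarith [hM _ (Finset.mem_image_of_mem _ hi)])⟩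

theorem exists_hasTermAt_minimal {σ : Type*} (α : K) {s : Finset σ} {f : σ → RatFunc K}
    (hs : ∃ i ∈ s, f i ≠ 0) :
    ∃ m, ∃ j ∈ s, ∃ c ≠ 0, HasTermAt α m c (f j) ∧ ∀ i ∈ s, ∃ d, HasTermAt α m d (f i) := by
  classical
  obtain ⟨j, hj, hmin⟩ := (s.filter (f · ≠ 0)).exists_min_image (fun i => ordAt α (f i))
    (by simpa [Finset.Nonempty] using hs)
  obtain ⟨hjs, hj0⟩ := Finset.mem_filter.mp hj
  obtain ⟨c, hc, hjc⟩ := exists_hasTermAt_ordAt (α := α) hj0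
  refine ⟨_, j, hjs, c, hc, hjc, fun i hi => ?_⟩
  rcases eq_or_ne (f i) 0 with hi0 | hi0
  · exact ⟨0, hi0 ▸ HasTermAt.zero α _⟩
  · exact exists_hasTermAt_of_le_ordAt (hmin i (Finset.mem_filter.mpr ⟨hi, hi0⟩))

noncomputable def polyOp (r : ℕ) (q : ℕ → K[X]) : K[X] →ₗ[K] K[X] :=
  ∑ i ∈ Finset.range (r + 1), LinearMap.mulLeft K (q i) ∘ₗ derivative ^ i

theorem polyOp_apply (r : ℕ) (q : ℕ → K[X]) (p : K[X]) :
    polyOp r q p = ∑ i ∈ Finset.range (r + 1), q i * derivative^[i] p := by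
  simp [polyOp, LinearMap.sum_apply, Module.End.pow_apply]

theorem applyOp_algebraMap (r : ℕ) (q : ℕ → K[X]) (p : K[X]) :
    applyOp r q (ι p) = ι (polyOp r q p) := by
  simp only [applyOp, polyOp_apply, map_sum, map_mul, ratDeriv_iterate_algebraMap]

theorem exists_polyOp_X_sub_C_pow (α : K) (r : ℕ) (q : ℕ → K[X]) (N : ℕ) :
    ∃ h : K[X], polyOp r q ((X - C α) ^ (N + r)) = (X - C α) ^ N * h ∧
      h.eval α = (q r).eval α * (N + r).descFactorial r := by
  refine ⟨∑ i ∈ Finset.range (r + 1), q i * ((N + r).descFactorial i : K[X]) * (X - C α) ^ (r - i),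
    ?_, ?_⟩
  · rw [polyOp_apply, Finset.mul_sum]
    refine Finset.sum_congr rfl fun i hi => ?_
    have hir : i ≤ r := Nat.lt_succ_iff.mp (Finset.mem_range.mp hi)
    rw [iterate_derivative_X_sub_pow, nsmul_eq_mul, show N + r - i = N + (r - i) by omega, pow_add]
    ring
  · rw [eval_finsetSum, Finset.sum_eq_single r]
    · simp
    · intro i hi hir
      have : r - i ≠ 0 := by have := Finset.mem_range.mp hi; omega
      simp [zero_pow this]
    · exact fun hr => absurd (Finset.self_mem_range_succ r) hr

/-- Adding `c (x - α)^(N + r)` to `F` corrects the coefficient of `(x - α)^N` in `L F`, because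
`L ((x - α)^(N + r)) = (x - α)^N h` where `h(α) = q r(α) · (N + r) ⋯ (N + 1) ≠ 0` is the indicial
polynomial of `L` at `α` evaluated at `N + r`. -/
theorem exists_polyOp_dvd [CharZero K] {r : ℕ} {q : ℕ → K[X]} (hα : (q r).eval α ≠ 0)
    (F₀ : K[X]) (N : ℕ) : ∃ F, (X - C α) ^ r ∣ F - F₀ ∧ (X - C α) ^ N ∣ polyOp r q F := by
  induction N with
  | zero => exact ⟨F₀, by simp, by simp⟩
  | succ N ih =>
    obtain ⟨F, hF, g, hg⟩ := ih
    obtain ⟨h, hh, hhα⟩ := exists_polyOp_X_sub_C_pow α r q N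
    have hhα0 : h.eval α ≠ 0 := by
      rw [hhα]
      exact mul_ne_zero hα (Nat.cast_ne_zero.mpr (Nat.descFactorial_pos.mpr le_add_self).ne')
    set c := -g.eval α / h.eval α
    obtain ⟨g', hg'⟩ : X - C α ∣ g + c • h := by
      rw [dvd_iff_isRoot, IsRoot.def, eval_add, eval_smul, smul_eq_mul, div_mul_cancel₀ _ hhα0,
        add_neg_cancel]
    refine ⟨F + c • (X - C α) ^ (N + r), ?_, g', ?_⟩
    · rw [add_sub_right_comm]
      exact dvd_add hF (dvd_smul_of_dvd _ (pow_dvd_pow _ (Nat.le_add_left r N)))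
    · rw [map_add, map_smul, hg, hh, ← mul_smul_comm, ← mul_add, hg', pow_succ, mul_assoc]

theorem eval_iterate_derivative_X_sub_C_pow_add {G : K[X]} {r i : ℕ}
    (j : ℕ) (hG : (X - C α) ^ r ∣ G) (hi : i < r) :
    (derivative^[i] ((X - C α) ^ j + G)).eval α = if i = j then (j.factorial : K) else 0 := by
  have hGα : (derivative^[i] G).eval α = 0 := by
    rw [← IsRoot.def, ← dvd_iff_isRoot]
    exact (dvd_pow_self _ (by omega)).trans (pow_sub_dvd_iterate_derivative_of_pow_dvd i hG)
  rw [iterate_map_add, iterate_derivative_X_sub_pow, eval_add, hGα, add_zero, eval_smul,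
    eval_pow, eval_sub, eval_X, eval_C, sub_self, nsmul_eq_mul]
  split_ifs with hij
  · simp [hij, Nat.descFactorial_self]
  rcases Nat.lt_or_gt_of_ne hij with hij | hij
  · simp [zero_pow (Nat.sub_ne_zero_of_lt hij)]
  · simp [Nat.descFactorial_eq_zero_iff_lt.mpr hij]

theorem hasTermAt_sum_mul_iterate_ratDeriv {r j : ℕ} {a : ℕ → RatFunc K} {F : K[X]}
    (ha : ∀ i ∈ Finset.range r, ∃ d, HasTermAt α m d (a i)) (hj : j ∈ Finset.range r)
    (hjc : HasTermAt α m c (a j)) (hF : (X - C α) ^ r ∣ F - (X - C α) ^ j) :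
    HasTermAt α m (j.factorial * c) (∑ i ∈ Finset.range r, a i * ratDeriv^[i] (ι F)) := by
  choose! d hd using ha
  have hterm : ∀ i ∈ Finset.range r,
      HasTermAt α m (d i * if i = j then (j.factorial : K) else 0) (a i * ratDeriv^[i] (ι F)) := by
    intro i hi
    have hF' : F = (X - C α) ^ j + (F - (X - C α) ^ j) := by ring
    rw [ratDeriv_iterate_algebraMap, ← eval_iterate_derivative_X_sub_C_pow_add j hF
      (Finset.mem_range.mp hi), ← hF', ← add_zero m]
    exact (hd i hi).mul (hasTermAt_algebraMap α _)
  have hsum := HasTermAt.sum hterm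
  rwa [Finset.sum_eq_single_of_mem j hj (fun i _ hij => by rw [if_neg hij, mul_zero]), if_pos rfl,
    (hd j hj).unique hjc, mul_comm] at hsum

theorem exists_hasTermAt_sum_mul_iterate_ratDeriv {n N : ℕ} {β : ℤ} {b : ℕ → RatFunc K}
    {g : K[X]} (hb : ∀ t ∈ Finset.range (n + 1), ∃ d, HasTermAt α β d (b t))
    (hg : (X - C α) ^ N ∣ g) :
    ∃ d, HasTermAt α (β + N - n) d (∑ t ∈ Finset.range (n + 1), b t * ratDeriv^[t] (ι g)) := by
  refine HasTermAt.exists_sum fun t ht => ?_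
  obtain ⟨d, hd⟩ := hb t ht
  obtain ⟨e, he⟩ := exists_hasTermAt_of_dvd (pow_sub_dvd_iterate_derivative_of_pow_dvd t hg)
  rw [ratDeriv_iterate_algebraMap]
  have := Finset.mem_range.mp ht
  exact (hd.mul he).exists_of_le (by omega)

end

theorem coefficients_regular_at_ordinary_point_general {K : Type*} [Field K] [CharZero K]
    (r rB : ℕ) (pM qL : ℕ → K[X]) (a b : ℕ → RatFunc K)
    (α : K)
    (hMα : Polynomial.eval α (pM r) ≠ 0) (hLα : Polynomial.eval α (qL r) ≠ 0)
    (hcomp : ∀ f : RatFunc K,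
      applyOp r pM (∑ i ∈ Finset.range r, a i * ratDeriv^[i] f) =
        ∑ j ∈ Finset.range (rB + 1), b j * ratDeriv^[j] (applyOp r qL f)) :
    ∀ i < r, Polynomial.eval α (a i).denom ≠ 0 := by
  by_contra! ⟨i₀, hi₀r, hpole⟩
  have hi₀ : i₀ ∈ Finset.range r := Finset.mem_range.mpr hi₀r
  obtain ⟨m, j, hj, c, hc, hjc, ha⟩ :=
    exists_hasTermAt_minimal (f := a) α ⟨i₀, hi₀, fun h => by simp [h] at hpole⟩
  have hm : m < 0 := by
    by_contra! hm
    obtain ⟨d, hd⟩ := ha i₀ hi₀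
    exact hd.regAt hm hpole
  obtain ⟨β, hb⟩ := exists_forall_hasTermAt α (Finset.range (rB + 1)) b
  -- `L F` vanishes to an order `N` with `β + N - rB > m - r`
  obtain ⟨F, hF, hLF⟩ := exists_polyOp_dvd hLα ((X - C α) ^ j) (rB + (m - r + 1 - β).toNat)
  have hlhs := (hasTermAt_sum_mul_iterate_ratDeriv ha hj hjc hF).applyOp r pM
  obtain ⟨d, hrhs⟩ := exists_hasTermAt_sum_mul_iterate_ratDeriv hb hLF
  obtain ⟨e, hrhs⟩ := hrhs.exists_of_le (m := m - r + 1) (by omega)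
  rw [← applyOp_algebraMap, ← hcomp] at hrhs
  have hfalling : ∏ t ∈ Finset.range r, ((m : K) - t) ≠ 0 :=
    Finset.prod_ne_zero_iff.mpr fun t _ => sub_ne_zero.mpr (by exact_mod_cast (by omega : m ≠ t))
  exact mul_ne_zero (mul_ne_zero hMα hfalling)
    (mul_ne_zero (Nat.cast_ne_zero.mpr j.factorial_ne_zero) hc)
    (hlhs.unique (hrhs.of_lt (lt_add_one _)))

/-- if `M∘A = B∘L` where `L` has order `r`, `A = ∑_{i<r} aᵢ ∂ⁱ` has
order at most `r−1`, and `α` is a singularity of neither `M` nor `L` (their leading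
coefficients do not vanish at `α`), then no coefficient `aᵢ` of `A` has a pole at `α`. -/
theorem coefficients_regular_at_ordinary_point {K : Type*} [Field K] [CharZero K]
    [IsAlgClosed K]
    (r rB : ℕ) (pM qL : ℕ → K[X]) (a b : ℕ → RatFunc K)
    (hq : qL r ≠ 0) (α : K)
    (hMα : Polynomial.eval α (pM r) ≠ 0) (hLα : Polynomial.eval α (qL r) ≠ 0)
    (hcomp : ∀ f : RatFunc K,
      applyOp r pM (∑ i ∈ Finset.range r, a i * ratDeriv^[i] f) =
        ∑ j ∈ Finset.range (rB + 1), b j * ratDeriv^[j] (applyOp r qL f)) :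
    ∀ i < r, Polynomial.eval α (a i).denom ≠ 0 :=
  coefficients_regular_at_ordinary_point_general r rB pM qL a b α hMα hLα hcomp
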